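/- arXiv:1705.07817 — 9 statements merged into one kernel-verified Lean document; each statement's English description precedes it below -/
import Mathlib

section
/- Let N, L ∈ ℕ, samples (x_ℓ, y_ℓ) ∈ ℝ^N × ℝ for ℓ = 1,…,L, λ ≥ 0, C ⊆ ℝ^{N×N} any subset, and ‖·‖ any norm on ℝ^N. Then the infimum over (v, Θ) ∈ ℝ^N × C of F(v, Θ) + (λ/2)‖Θ‖_1 + λ Σ_{i=1}^N max{|v_i|, ‖Θ_{i,·}‖} equals the infimum over all (v⁺, v⁻, Θ) with v⁺, v⁻ ∈ ℝ^N componentwise nonnegative, Θ ∈ C, and ‖Θ_{i,·}‖ ≤ v⁺_i + v⁻_i for all i, of F(v⁺ − v⁻, Θ) + (λ/2)‖Θ‖_1 + λ Σ_{i=1}^N (v⁺_i + v⁻_i). -/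
/-!
Both problems have the same values up to domination: a point `(v, Θ)` of the first problem gives
the feasible point `v⁺ = (s + v)/2`, `v⁻ = (s - v)/2` of the second, with `s_i = max |v_i| ‖Θ_{i,·}‖`,
at the same cost; conversely a feasible `(v⁺, v⁻, Θ)` gives `v = v⁺ − v⁻`, whose cost is no larger
since `max |v⁺_i − v⁻_i| ‖Θ_{i,·}‖ ≤ v⁺_i + v⁻_i` and `λ ≥ 0`. Mutual domination of two sets of reals
forces equal infima, with no boundedness or nonemptiness needed.
-/

/-- The quadratic-interaction least-squares fit
`F(v, Θ) = ½ ∑ₗ (yₗ − xₗᵀ v − xₗᵀ Θ xₗ)²`. -/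
noncomputable def lsFit (N L : ℕ) (x : Fin L → Fin N → ℝ) (y : Fin L → ℝ)
    (v : Fin N → ℝ) (Θ : Fin N → Fin N → ℝ) : ℝ :=
  (1 / 2) * ∑ ℓ, (y ℓ - ∑ i, x ℓ i * v i - ∑ i, ∑ j, x ℓ i * Θ i j * x ℓ j) ^ 2

theorem exists_sub_eq_add_eq_of_abs_le {α : Type*} [Field α] [LinearOrder α]
    [IsStrictOrderedRing α] {v s : α} (h : |v| ≤ s) :
    ∃ p m : α, 0 ≤ p ∧ 0 ≤ m ∧ p - m = v ∧ p + m = s :=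
  ⟨(s + v) / 2, (s - v) / 2, by linarith [neg_abs_le v], by linarith [le_abs_self v],
    by ring, by ring⟩

theorem max_abs_sub_le_add {α : Type*} [AddCommGroup α] [LinearOrder α] [IsOrderedAddMonoid α]
    {p m t : α} (hp : 0 ≤ p) (hm : 0 ≤ m) (ht : t ≤ p + m) : max |p - m| t ≤ p + m :=
  max_le (abs_sub_le_iff.2 ⟨(sub_le_self p hm).trans (le_add_of_nonneg_right hm),
    (sub_le_self m hp).trans (le_add_of_nonneg_left hp)⟩) ht

theorem stmt_3_general (N L : ℕ) (x : Fin L → Fin N → ℝ) (y : Fin L → ℝ)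
    (lam : ℝ) (hlam : 0 ≤ lam) (C : Set (Fin N → Fin N → ℝ))
    (nrm : Seminorm ℝ (Fin N → ℝ)) :
    sInf {r : ℝ | ∃ v : Fin N → ℝ, ∃ Θ : Fin N → Fin N → ℝ, Θ ∈ C ∧
        r = lsFit N L x y v Θ + (lam / 2) * (∑ i, ∑ j, |Θ i j|) +
          lam * ∑ i, max |v i| (nrm (Θ i))} =
    sInf {r : ℝ | ∃ vp vm : Fin N → ℝ, ∃ Θ : Fin N → Fin N → ℝ,
        (∀ i, 0 ≤ vp i) ∧ (∀ i, 0 ≤ vm i) ∧ Θ ∈ C ∧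
        (∀ i, nrm (Θ i) ≤ vp i + vm i) ∧
        r = lsFit N L x y (fun i => vp i - vm i) Θ + (lam / 2) * (∑ i, ∑ j, |Θ i j|) +
          lam * ∑ i, (vp i + vm i)} := by
  apply csInf_eq_csInf_of_forall_exists_le
  · rintro _ ⟨v, Θ, hΘ, rfl⟩
    choose vp vm hvp hvm hsub hadd using fun i =>
      exists_sub_eq_add_eq_of_abs_le (le_max_left |v i| (nrm (Θ i)))
    have hv : (fun i => vp i - vm i) = v := funext hsub
    refine ⟨_, ⟨vp, vm, Θ, hvp, hvm, hΘ, fun i => (hadd i).symm ▸ le_max_right _ _, rfl⟩, ?_⟩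
    simp only [hv, hadd, le_refl]
  · rintro _ ⟨vp, vm, Θ, hvp, hvm, hΘ, hnrm, rfl⟩
    refine ⟨_, ⟨fun i => vp i - vm i, Θ, hΘ, rfl⟩, ?_⟩
    gcongr with i
    exact max_abs_sub_le_add (hvp i) (hvm i) (hnrm i)

/-- Proposition 1: the infimum of the hierarchical-interaction objective over
`ℝ^N × C` equals the infimum of its epigraphical reformulation. -/
theorem stmt_3 (N L : ℕ) (x : Fin L → Fin N → ℝ) (y : Fin L → ℝ)
    (lam : ℝ) (hlam : 0 ≤ lam) (C : Set (Fin N → Fin N → ℝ))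
    (nrm : Seminorm ℝ (Fin N → ℝ)) (hdef : ∀ u, nrm u = 0 → u = 0) :
    sInf {r : ℝ | ∃ v : Fin N → ℝ, ∃ Θ : Fin N → Fin N → ℝ, Θ ∈ C ∧
        r = lsFit N L x y v Θ + (lam / 2) * (∑ i, ∑ j, |Θ i j|) +
          lam * ∑ i, max |v i| (nrm (Θ i))} =
    sInf {r : ℝ | ∃ vp vm : Fin N → ℝ, ∃ Θ : Fin N → Fin N → ℝ,
        (∀ i, 0 ≤ vp i) ∧ (∀ i, 0 ≤ vm i) ∧ Θ ∈ C ∧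
        (∀ i, nrm (Θ i) ≤ vp i + vm i) ∧
        r = lsFit N L x y (fun i => vp i - vm i) Θ + (lam / 2) * (∑ i, ∑ j, |Θ i j|) +
          lam * ∑ i, (vp i + vm i)} :=
  stmt_3_general N L x y lam hlam C nrm
end

section
/- Let N, L ∈ ℕ, samples (x_ℓ, y_ℓ) ∈ ℝ^N × ℝ, λ ≥ 0, C ⊆ ℝ^{N×N}, and ‖·‖ any norm on ℝ^N. If (v̂⁺, v̂⁻, Θ̂) is a global minimizer of F(v⁺ − v⁻, Θ) + (λ/2)‖Θ‖_1 + λ Σ_{i=1}^N (v⁺_i + v⁻_i) over the set of (v⁺, v⁻, Θ) with v⁺, v⁻ componentwise nonnegative, Θ ∈ C, and ‖Θ_{i,·}‖ ≤ v⁺_i + v⁻_i for all i, then (v̂⁺ − v̂⁻, Θ̂) is a global minimizer of F(v, Θ) + (λ/2)‖Θ‖_1 + λ Σ_{i=1}^N max{|v_i|, ‖Θ_{i,·}‖} over ℝ^N × C. -/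
section EpigraphSplit

variable {ι X : Type*} [Fintype ι]

lemma sum_max_abs_sub_le_sum_add {a b r : ι → ℝ} (ha : ∀ i, 0 ≤ a i) (hb : ∀ i, 0 ≤ b i)
    (hr : ∀ i, r i ≤ a i + b i) : ∑ i, max |a i - b i| (r i) ≤ ∑ i, (a i + b i) :=
  Finset.sum_le_sum fun i _ =>
    max_le (abs_sub_le_iff.mpr ⟨by linarith [hb i], by linarith [ha i]⟩) (hr i)

lemma half_add_nonneg_of_abs_le {v s : ℝ} (h : |v| ≤ s) : 0 ≤ (s + v) / 2 := by
  linarith [neg_abs_le v]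

lemma half_sub_nonneg_of_abs_le {v s : ℝ} (h : |v| ≤ s) : 0 ≤ (s - v) / 2 := by
  linarith [le_abs_self v]

theorem hierarchical_le_of_epigraph_minimizer (f : (ι → ℝ) → X → ℝ) (ρ : X → ι → ℝ) {lam : ℝ} (hlam : 0 ≤ lam)
    (C : Set X) {vph vmh : ι → ℝ} {Θh : X} (hvp : ∀ i, 0 ≤ vph i) (hvm : ∀ i, 0 ≤ vmh i)
    (hrow : ∀ i, ρ Θh i ≤ vph i + vmh i)
    (hmin : ∀ (vp vm : ι → ℝ) (Θ : X), (∀ i, 0 ≤ vp i) → (∀ i, 0 ≤ vm i) → Θ ∈ C →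
      (∀ i, ρ Θ i ≤ vp i + vm i) →
      f (fun i => vph i - vmh i) Θh + lam * ∑ i, (vph i + vmh i) ≤
        f (fun i => vp i - vm i) Θ + lam * ∑ i, (vp i + vm i))
    (v : ι → ℝ) {Θ : X} (hΘ : Θ ∈ C) :
    f (fun i => vph i - vmh i) Θh + lam * ∑ i, max |vph i - vmh i| (ρ Θh i) ≤
      f v Θ + lam * ∑ i, max |v i| (ρ Θ i) := by
  set s : ι → ℝ := fun i => max |v i| (ρ Θ i)
  have hvs : ∀ i, |v i| ≤ s i := fun i => le_max_left _ _
  have hsplit := hmin (fun i => (s i + v i) / 2) (fun i => (s i - v i) / 2) Θ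
    (fun i => half_add_nonneg_of_abs_le (hvs i)) (fun i => half_sub_nonneg_of_abs_le (hvs i)) hΘ
    (fun i => by linarith [le_max_right |v i| (ρ Θ i)])
  have hdiff : (fun i => (s i + v i) / 2 - (s i - v i) / 2) = v := by funext i; ring
  have hsum : ∑ i, ((s i + v i) / 2 + (s i - v i) / 2) = ∑ i, s i :=
    Finset.sum_congr rfl fun i _ => by ring
  rw [hdiff, hsum] at hsplit
  have hhat := mul_le_mul_of_nonneg_left (sum_max_abs_sub_le_sum_add hvp hvm hrow) hlam
  linarith

end EpigraphSplit

theorem stmt_4_general (N L : ℕ) (x : Fin L → Fin N → ℝ) (y : Fin L → ℝ)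
    (lam : ℝ) (hlam : 0 ≤ lam) (C : Set (Fin N → Fin N → ℝ))
    (nrm : Seminorm ℝ (Fin N → ℝ))
    (vph vmh : Fin N → ℝ) (Θh : Fin N → Fin N → ℝ)
    (hvp : ∀ i, 0 ≤ vph i) (hvm : ∀ i, 0 ≤ vmh i)
    (hrow : ∀ i, nrm (Θh i) ≤ vph i + vmh i)
    (hmin : ∀ (vp vm : Fin N → ℝ) (Θ : Fin N → Fin N → ℝ),
      (∀ i, 0 ≤ vp i) → (∀ i, 0 ≤ vm i) → Θ ∈ C → (∀ i, nrm (Θ i) ≤ vp i + vm i) →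
      lsFit N L x y (fun i => vph i - vmh i) Θh + (lam / 2) * (∑ i, ∑ j, |Θh i j|) +
          lam * ∑ i, (vph i + vmh i) ≤
        lsFit N L x y (fun i => vp i - vm i) Θ + (lam / 2) * (∑ i, ∑ j, |Θ i j|) +
          lam * ∑ i, (vp i + vm i)) :
    ∀ (v : Fin N → ℝ) (Θ : Fin N → Fin N → ℝ), Θ ∈ C →
      lsFit N L x y (fun i => vph i - vmh i) Θh + (lam / 2) * (∑ i, ∑ j, |Θh i j|) +
          lam * ∑ i, max |vph i - vmh i| (nrm (Θh i)) ≤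
        lsFit N L x y v Θ + (lam / 2) * (∑ i, ∑ j, |Θ i j|) +
          lam * ∑ i, max |v i| (nrm (Θ i)) :=
  fun v _ hΘ =>
    hierarchical_le_of_epigraph_minimizer (fun v Θ => lsFit N L x y v Θ + (lam / 2) * ∑ i, ∑ j, |Θ i j|)
      (fun Θ i => nrm (Θ i)) hlam C hvp hvm hrow hmin v hΘ

/-- Minimizer-transfer direction of Proposition 1: a global minimizer of the
epigraphical formulation yields a global minimizer `(v̂⁺ − v̂⁻, Θ̂)` of the original
hierarchical-interaction problem over `ℝ^N × C`. -/
theorem stmt_4 (N L : ℕ) (x : Fin L → Fin N → ℝ) (y : Fin L → ℝ)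
    (lam : ℝ) (hlam : 0 ≤ lam) (C : Set (Fin N → Fin N → ℝ))
    (nrm : Seminorm ℝ (Fin N → ℝ)) (hdef : ∀ u, nrm u = 0 → u = 0)
    (vph vmh : Fin N → ℝ) (Θh : Fin N → Fin N → ℝ)
    (hvp : ∀ i, 0 ≤ vph i) (hvm : ∀ i, 0 ≤ vmh i) (hΘ : Θh ∈ C)
    (hrow : ∀ i, nrm (Θh i) ≤ vph i + vmh i)
    (hmin : ∀ (vp vm : Fin N → ℝ) (Θ : Fin N → Fin N → ℝ),
      (∀ i, 0 ≤ vp i) → (∀ i, 0 ≤ vm i) → Θ ∈ C → (∀ i, nrm (Θ i) ≤ vp i + vm i) →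
      lsFit N L x y (fun i => vph i - vmh i) Θh + (lam / 2) * (∑ i, ∑ j, |Θh i j|) +
          lam * ∑ i, (vph i + vmh i) ≤
        lsFit N L x y (fun i => vp i - vm i) Θ + (lam / 2) * (∑ i, ∑ j, |Θ i j|) +
          lam * ∑ i, (vp i + vm i)) :
    ∀ (v : Fin N → ℝ) (Θ : Fin N → Fin N → ℝ), Θ ∈ C →
      lsFit N L x y (fun i => vph i - vmh i) Θh + (lam / 2) * (∑ i, ∑ j, |Θh i j|) +
          lam * ∑ i, max |vph i - vmh i| (nrm (Θh i)) ≤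
        lsFit N L x y v Θ + (lam / 2) * (∑ i, ∑ j, |Θ i j|) +
          lam * ∑ i, max |v i| (nrm (Θ i)) :=
  stmt_4_general N L x y lam hlam C nrm vph vmh Θh hvp hvm hrow hmin
end

section
/- Let N, L ∈ ℕ, samples (x_ℓ, y_ℓ) ∈ ℝ^N × ℝ, λ ≥ 0, C ⊆ ℝ^{N×N}, and ‖·‖ any norm on ℝ^N. If (v̂, Θ̂) ∈ ℝ^N × C is a global minimizer of F(v, Θ) + (λ/2)‖Θ‖_1 + λ Σ_{i=1}^N max{|v_i|, ‖Θ_{i,·}‖}, then setting v̂⁺_i = max{ max{0, v̂_i}, (‖Θ̂_{i,·}‖ + v̂_i)/2 } and v̂⁻ = v̂⁺ − v̂ produces a triple (v̂⁺, v̂⁻, Θ̂) that is a global minimizer of F(v⁺ − v⁻, Θ) + (λ/2)‖Θ‖_1 + λ Σ_{i=1}^N (v⁺_i + v⁻_i) over the set of (v⁺, v⁻, Θ) with v⁺, v⁻ componentwise nonnegative, Θ ∈ C, and ‖Θ_{i,·}‖ ≤ v⁺_i + v⁻_i for all i. -/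
lemma max_abs_sub_le_add_s5 {p m n : ℝ} (hp : 0 ≤ p) (hm : 0 ≤ m) (hn : n ≤ p + m) :
    max |p - m| n ≤ p + m :=
  max_le ((abs_sub p m).trans_eq (by rw [abs_of_nonneg hp, abs_of_nonneg hm])) hn

lemma two_mul_max_max_zero_sub (a n : ℝ) :
    2 * max (max 0 a) ((n + a) / 2) - a = max |a| n := by
  rw [abs_eq_max_neg]
  grind

lemma max_max_zero_nonneg (a b : ℝ) : 0 ≤ max (max 0 a) b :=
  (le_max_left 0 a).trans (le_max_left _ b)

lemma le_max_max_zero (a b : ℝ) : a ≤ max (max 0 a) b :=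
  (le_max_right 0 a).trans (le_max_left _ b)

theorem stmt_5_general (N L : ℕ) (x : Fin L → Fin N → ℝ) (y : Fin L → ℝ)
    (lam : ℝ) (hlam : 0 ≤ lam) (C : Set (Fin N → Fin N → ℝ))
    (nrm : Seminorm ℝ (Fin N → ℝ))
    (vh : Fin N → ℝ) (Θh : Fin N → Fin N → ℝ) (hΘ : Θh ∈ C)
    (hmin : ∀ (v : Fin N → ℝ) (Θ : Fin N → Fin N → ℝ), Θ ∈ C →
      lsFit N L x y vh Θh + (lam / 2) * (∑ i, ∑ j, |Θh i j|) +
          lam * ∑ i, max |vh i| (nrm (Θh i)) ≤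
        lsFit N L x y v Θ + (lam / 2) * (∑ i, ∑ j, |Θ i j|) +
          lam * ∑ i, max |v i| (nrm (Θ i)))
    (vph vmh : Fin N → ℝ)
    (hvph : ∀ i, vph i = max (max 0 (vh i)) ((nrm (Θh i) + vh i) / 2))
    (hvmh : ∀ i, vmh i = vph i - vh i) :
    (∀ i, 0 ≤ vph i) ∧ (∀ i, 0 ≤ vmh i) ∧ Θh ∈ C ∧
    (∀ i, nrm (Θh i) ≤ vph i + vmh i) ∧
    ∀ (vp vm : Fin N → ℝ) (Θ : Fin N → Fin N → ℝ),
      (∀ i, 0 ≤ vp i) → (∀ i, 0 ≤ vm i) → Θ ∈ C → (∀ i, nrm (Θ i) ≤ vp i + vm i) →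
      lsFit N L x y (fun i => vph i - vmh i) Θh + (lam / 2) * (∑ i, ∑ j, |Θh i j|) +
          lam * ∑ i, (vph i + vmh i) ≤
        lsFit N L x y (fun i => vp i - vm i) Θ + (lam / 2) * (∑ i, ∑ j, |Θ i j|) +
          lam * ∑ i, (vp i + vm i) := by
  have hsplit : ∀ i, vph i + vmh i = max |vh i| (nrm (Θh i)) := fun i => by
    rw [hvmh, hvph, ← two_mul_max_max_zero_sub]
    ring
  have hdiff : (fun i => vph i - vmh i) = vh := funext fun i => by
    rw [hvmh]
    ring
  refine ⟨fun i => hvph i ▸ max_max_zero_nonneg _ _,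
    fun i => by rw [hvmh, sub_nonneg, hvph]; exact le_max_max_zero _ _, hΘ,
    fun i => (hsplit i).symm ▸ le_max_right _ _, ?_⟩
  intro vp vm Θ hvp hvm hΘC hle
  rw [hdiff, Finset.sum_congr rfl fun i _ => hsplit i]
  calc _ ≤ _ := hmin (fun i => vp i - vm i) Θ hΘC
    _ ≤ _ := by
      gcongr with i
      exact max_abs_sub_le_add_s5 (hvp i) (hvm i) (hle i)

/-- Converse minimizer-transfer direction of Proposition 1: if `(v̂, Θ̂)` is a global
minimizer of the original hierarchical-interaction problem, then the explicit split
`v̂⁺ᵢ = max { max{0, v̂ᵢ}, (‖Θ̂ᵢ‖ + v̂ᵢ)/2 }`, `v̂⁻ = v̂⁺ − v̂` gives a global minimizer of the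
epigraphical formulation. -/
theorem stmt_5 (N L : ℕ) (x : Fin L → Fin N → ℝ) (y : Fin L → ℝ)
    (lam : ℝ) (hlam : 0 ≤ lam) (C : Set (Fin N → Fin N → ℝ))
    (nrm : Seminorm ℝ (Fin N → ℝ)) (hdef : ∀ u, nrm u = 0 → u = 0)
    (vh : Fin N → ℝ) (Θh : Fin N → Fin N → ℝ) (hΘ : Θh ∈ C)
    (hmin : ∀ (v : Fin N → ℝ) (Θ : Fin N → Fin N → ℝ), Θ ∈ C →
      lsFit N L x y vh Θh + (lam / 2) * (∑ i, ∑ j, |Θh i j|) +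
          lam * ∑ i, max |vh i| (nrm (Θh i)) ≤
        lsFit N L x y v Θ + (lam / 2) * (∑ i, ∑ j, |Θ i j|) +
          lam * ∑ i, max |v i| (nrm (Θ i)))
    (vph vmh : Fin N → ℝ)
    (hvph : ∀ i, vph i = max (max 0 (vh i)) ((nrm (Θh i) + vh i) / 2))
    (hvmh : ∀ i, vmh i = vph i - vh i) :
    (∀ i, 0 ≤ vph i) ∧ (∀ i, 0 ≤ vmh i) ∧ Θh ∈ C ∧
    (∀ i, nrm (Θh i) ≤ vph i + vmh i) ∧
    ∀ (vp vm : Fin N → ℝ) (Θ : Fin N → Fin N → ℝ),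
      (∀ i, 0 ≤ vp i) → (∀ i, 0 ≤ vm i) → Θ ∈ C → (∀ i, nrm (Θ i) ≤ vp i + vm i) →
      lsFit N L x y (fun i => vph i - vmh i) Θh + (lam / 2) * (∑ i, ∑ j, |Θh i j|) +
          lam * ∑ i, (vph i + vmh i) ≤
        lsFit N L x y (fun i => vp i - vm i) Θ + (lam / 2) * (∑ i, ∑ j, |Θ i j|) +
          lam * ∑ i, (vp i + vm i) :=
  stmt_5_general N L x y lam hlam C nrm vh Θh hΘ hmin vph vmh hvph hvmh
end

section
/- Let N ∈ ℕ and let E_∞ = {(ω⁺, ω⁻, u) ∈ ℝ × ℝ × ℝ^N : ‖u‖_∞ ≤ ω⁺ + ω⁻}. Let (ω⁺, ω⁻, u) ∈ ℝ × ℝ × ℝ^N and let ν be a nondecreasing rearrangement of (|u_1|, …, |u_N|). Suppose n̄ ∈ {1, …, N} is such that, setting η⁻ = (ω⁻ − (N − n̄ + 1)(ω⁺ − ω⁻) + Σ_{i=n̄}^N ν_i) / (1 + 2(N − n̄ + 1)) and η⁺ = η⁻ + ω⁺ − ω⁻, one has 0 ≤ η⁺ + η⁻ ≤ ν_{n̄}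 and (if n̄ ≥ 2) ν_{n̄−1} < η⁺ + η⁻. Then the Euclidean projection of (ω⁺, ω⁻, u) onto E_∞ is (η⁺, η⁻, p) with p_i = min{max{u_i, −(η⁺ + η⁻)}, η⁺ + η⁻} for every i. -/
/-!
A point `p` of a convex set `C` is the projection of `x` as soon as `⟪x - p, p - z⟫ ≥ 0` for all
`z ∈ C`, since then `‖x - z‖² = ‖x - p‖² + ‖p - z‖² + 2⟪x - p, p - z⟫`. With `t = η⁺ + η⁻` and
`p` the clipping of `u` to `[-t, t]`, a competitor `z = (z⁺, z⁻, w) ∈ E_∞` with `s = z⁺ + z⁻`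
gets a contribution of at least `(|uᵢ| - t)⁺ (t - s)` from each coordinate `i`, and exactly
`(ω⁻ - η⁻)(t - s)` from the two scalar coordinates. The choice of `n̄` says exactly which `|uᵢ|` exceed `t`, and the formula for
`η⁻` is then equivalent to `∑ᵢ (|uᵢ| - t)⁺ = η⁻ - ω⁻`, so the two contributions cancel.
-/

/-- Squared Euclidean distance on `ℝ × ℝ × ℝ^N`. -/
noncomputable def dsq (N : ℕ) (z z' : ℝ × ℝ × (Fin N → ℝ)) : ℝ :=
  (z.1 - z'.1) ^ 2 + (z.2.1 - z'.2.1) ^ 2 + ∑ i, (z.2.2 i - z'.2.2 i) ^ 2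

/-- `E_∞ = {(ω⁺, ω⁻, u) : ‖u‖_∞ ≤ ω⁺ + ω⁻}` (the `Pi` norm on `Fin N → ℝ` is the sup norm). -/
def Einf (N : ℕ) : Set (ℝ × ℝ × (Fin N → ℝ)) := {z | ‖z.2.2‖ ≤ z.1 + z.2.1}

open Finset

lemma dsq_le_dsq_of_inner_nonneg {N : ℕ} (x p z : ℝ × ℝ × (Fin N → ℝ))
    (h : 0 ≤ (x.1 - p.1) * (p.1 - z.1) + (x.2.1 - p.2.1) * (p.2.1 - z.2.1) +
      ∑ i, (x.2.2 i - p.2.2 i) * (p.2.2 i - z.2.2 i)) :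
    dsq N x p ≤ dsq N x z := by
  have hpz : 0 ≤ dsq N p z := by
    unfold dsq
    have := sum_nonneg fun i (_ : i ∈ univ) => sq_nonneg (p.2.2 i - z.2.2 i)
    positivity
  have hsplit : ∑ i, (x.2.2 i - z.2.2 i) ^ 2 = ∑ i, (x.2.2 i - p.2.2 i) ^ 2 +
      ∑ i, (p.2.2 i - z.2.2 i) ^ 2 + 2 * ∑ i, (x.2.2 i - p.2.2 i) * (p.2.2 i - z.2.2 i) := by
    rw [mul_sum, ← sum_add_distrib, ← sum_add_distrib]
    exact sum_congr rfl fun i _ => by ring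
  have hexpand : dsq N x z = dsq N x p + dsq N p z +
      2 * ((x.1 - p.1) * (p.1 - z.1) + (x.2.1 - p.2.1) * (p.2.1 - z.2.1) +
        ∑ i, (x.2.2 i - p.2.2 i) * (p.2.2 i - z.2.2 i)) := by
    unfold dsq
    rw [hsplit]
    ring
  linarith

lemma abs_min_max_neg_le (x : ℝ) {t : ℝ} (ht : 0 ≤ t) : |min (max x (-t)) t| ≤ t :=
  abs_le.2 ⟨le_min (le_max_right _ _) (by linarith), min_le_right _ _⟩

lemma max_abs_sub_mul_le_sub_clip_mul {x t w s : ℝ} (ht : 0 ≤ t) (hw : |w| ≤ s) :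
    max (|x| - t) 0 * (t - s) ≤ (x - min (max x (-t)) t) * (min (max x (-t)) t - w) := by
  obtain ⟨hsw, hws⟩ := abs_le.1 hw
  rcases le_total x (-t) with hx | hx
  · rw [max_eq_right hx, min_eq_left (by linarith), abs_of_nonpos (by linarith),
      max_eq_left (by linarith)]
    nlinarith
  rcases le_total x t with hx' | hx'
  · rw [max_eq_left hx, min_eq_left hx', max_eq_right (by linarith [abs_le.2 ⟨hx, hx'⟩])]
    simp
  · rw [max_eq_left hx, min_eq_right hx', abs_of_nonneg (by linarith), max_eq_left (by linarith)]
    nlinarith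

lemma sum_max_abs_sub_mul_le_sum_sub_clip_mul {ι : Type*} [Fintype ι] (u w : ι → ℝ)
    {t s : ℝ} (ht : 0 ≤ t) (hw : ‖w‖ ≤ s) :
    (∑ i, max (|u i| - t) 0) * (t - s) ≤
      ∑ i, (u i - min (max (u i) (-t)) t) * (min (max (u i) (-t)) t - w i) := by
  rw [sum_mul]
  exact sum_le_sum fun i _ => max_abs_sub_mul_le_sub_clip_mul ht
    ((Real.norm_eq_abs (w i)).symm.trans_le ((norm_le_pi_norm w i).trans hw))

lemma sum_max_sub_zero_eq {ι : Type*} [Fintype ι] (f : ι → ℝ) (s : Finset ι) {t : ℝ}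
    (hs : ∀ i ∈ s, t ≤ f i) (hsc : ∀ i ∉ s, f i ≤ t) :
    ∑ i, max (f i - t) 0 = ∑ i ∈ s, f i - #s * t := by
  rw [← sum_subset (subset_univ s) fun i _ hi => max_eq_right (by linarith [hsc i hi]),
    sum_congr rfl fun i hi => max_eq_left (by linarith [hs i hi]), sum_sub_distrib, sum_const,
    nsmul_eq_mul]

/-- `nbar : Fin N` is the 0-based version of the paper's 1-based `n̄`, so `N − n̄ + 1 = N − nbar`. -/
theorem stmt_8 (N : ℕ) (ωp ωm : ℝ) (u ν : Fin N → ℝ) (σ : Equiv.Perm (Fin N))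
    (hperm : ∀ i, ν i = |u (σ i)|) (hmono : Monotone ν)
    (nbar : Fin N) (ηp ηm : ℝ)
    (hηm : ηm = (ωm - ((N : ℝ) - ((nbar : ℕ) : ℝ)) * (ωp - ωm) +
        ∑ i ∈ Finset.univ.filter (fun i => nbar ≤ i), ν i) /
        (1 + 2 * ((N : ℝ) - ((nbar : ℕ) : ℝ))))
    (hηp : ηp = ηm + ωp - ωm)
    (h0 : 0 ≤ ηp + ηm) (h1 : ηp + ηm ≤ ν nbar)
    (h2 : ∀ j : Fin N, (j : ℕ) + 1 = (nbar : ℕ) → ν j < ηp + ηm) :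
    (ηp, ηm, fun i => min (max (u i) (-(ηp + ηm))) (ηp + ηm)) ∈ Einf N ∧
    ∀ z ∈ Einf N,
      dsq N (ωp, ωm, u) (ηp, ηm, fun i => min (max (u i) (-(ηp + ηm))) (ηp + ηm)) ≤
        dsq N (ωp, ωm, u) z := by
  set t := ηp + ηm with ht
  refine ⟨(pi_norm_le_iff_of_nonneg h0).2 fun i =>
    (Real.norm_eq_abs _).trans_le (abs_min_max_neg_le _ h0), fun ⟨z₁, z₂, w⟩ hz => ?_⟩
  have hbelow : ∀ i ∉ Ici nbar, ν i ≤ t := by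
    intro i hi
    have hi : (i : ℕ) < nbar := by simpa using hi
    let j : Fin N := ⟨nbar - 1, by omega⟩
    have hij : i ≤ j := Fin.mk_le_mk.2 (by omega)
    exact (hmono hij).trans (h2 j (show (nbar : ℕ) - 1 + 1 = nbar by omega)).le
  have hcard : ((#(Ici nbar) : ℕ) : ℝ) = N - nbar := by
    rw [Fin.card_Ici, Nat.cast_sub nbar.isLt.le]
  have hexcess : ∑ i, max (|u i| - t) 0 = ηm - ωm := by
    rw [← Equiv.sum_comp σ (fun i => max (|u i| - t) 0)]
    simp only [← hperm]
    rw [sum_max_sub_zero_eq ν _ (fun i hi => h1.trans (hmono (mem_Ici.1 hi))) hbelow, hcard]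
    have hden : 1 + 2 * ((N : ℝ) - nbar) ≠ 0 := by
      have : ((nbar : ℕ) : ℝ) ≤ N := by exact_mod_cast nbar.isLt.le
      linarith
    rw [filter_le_eq_Ici, eq_div_iff hden] at hηm
    linear_combination -hηm - ((N : ℝ) - nbar) * hηp
  apply dsq_le_dsq_of_inner_nonneg
  have hcoords := sum_max_abs_sub_mul_le_sum_sub_clip_mul u w h0 hz
  rw [hexcess] at hcoords
  have hscalar : (ωp - ηp) * (ηp - z₁) + (ωm - ηm) * (ηm - z₂) = (ωm - ηm) * (t - (z₁ + z₂)) := by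
    rw [ht, hηp]
    ring
  simp only at hcoords ⊢
  linarith
end

section
/- Let N ∈ ℕ, let E_∞ = {(ω⁺, ω⁻, u) ∈ ℝ × ℝ × ℝ^N : ‖u‖_∞ ≤ ω⁺ + ω⁻}, and let (ω⁺, ω⁻, u) ∈ ℝ × ℝ × ℝ^N. Define g(a, b) = (a − ω⁺)² + (b − ω⁻)² + Σ_{i=1}^N (max{|u_i| − a − b, 0})². If (η⁺, η⁻) minimizes g over {(a, b) ∈ ℝ² : a + b ≥ 0}, then the Euclidean projection of (ω⁺, ω⁻, u) onto E_∞ is (η⁺, η⁻, p) with p_i = min{max{u_i, −(η⁺ + η⁻)}, η⁺ + η⁻} for every i. -/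
/-! For fixed `(a, b)` with `a + b ≥ 0`, the nearest point of `E_∞` with first coordinates `(a, b)`
is obtained by clamping each `uᵢ` to `[-(a + b), a + b]`, at squared cost `(|uᵢ| - a - b)₊²`.
Minimizing the total cost `g(a, b)` over the half-plane therefore yields the projection. -/

/-- The function `g` of the dimension reduction. -/
noncomputable def reducedObjective {N : ℕ} (ωp ωm : ℝ) (u : Fin N → ℝ) (a b : ℝ) : ℝ :=
  (a - ωp) ^ 2 + (b - ωm) ^ 2 + ∑ i, max (|u i| - a - b) 0 ^ 2

lemma sq_sub_clamp (x : ℝ) {s : ℝ} (hs : 0 ≤ s) :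
    (x - min (max x (-s)) s) ^ 2 = max (|x| - s) 0 ^ 2 := by
  rcases le_total x s with hxs | hsx
  · rcases le_total (-s) x with hsx' | hxs'
    · rw [max_eq_left hsx', min_eq_left hxs, max_eq_right (by linarith [abs_le.mpr ⟨hsx', hxs⟩])]
      ring
    · rw [max_eq_right hxs', min_eq_left (by linarith), abs_of_nonpos (by linarith),
        max_eq_left (by linarith)]
      ring
  · rw [max_eq_left (by linarith), min_eq_right hsx, abs_of_nonneg (by linarith),
      max_eq_left (by linarith)]

lemma sq_max_abs_sub_le {x y s : ℝ} (hy : |y| ≤ s) : max (|x| - s) 0 ^ 2 ≤ (x - y) ^ 2 := by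
  have hdist : max (|x| - s) 0 ≤ |x - y| :=
    max_le (by linarith [abs_sub_abs_le_abs_sub x y]) (abs_nonneg _)
  rw [← sq_abs (x - y)]
  exact pow_le_pow_left₀ (le_max_right _ _) hdist 2

section Projection

variable {N : ℕ} (ωp ωm : ℝ) (u : Fin N → ℝ)

lemma clamp_mem_Einf {a b : ℝ} (hab : 0 ≤ a + b) :
    (a, b, fun i => min (max (u i) (-(a + b))) (a + b)) ∈ Einf N := by
  refine (pi_norm_le_iff_of_nonneg hab).mpr fun i => ?_
  rw [Real.norm_eq_abs, abs_le]
  exact ⟨le_min (le_max_right _ _) (by linarith), min_le_right _ _⟩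

lemma dsq_clamp_eq_reducedObjective {a b : ℝ} (hab : 0 ≤ a + b) :
    dsq N (ωp, ωm, u) (a, b, fun i => min (max (u i) (-(a + b))) (a + b)) =
      reducedObjective ωp ωm u a b := by
  simp only [dsq, reducedObjective, sq_sub_clamp _ hab, sub_sub]
  ring

lemma reducedObjective_le_dsq {z : ℝ × ℝ × (Fin N → ℝ)} (hz : z ∈ Einf N) :
    reducedObjective ωp ωm u z.1 z.2.1 ≤ dsq N (ωp, ωm, u) z := by
  have hcoord (i : Fin N) : |z.2.2 i| ≤ z.1 + z.2.1 := (norm_le_pi_norm z.2.2 i).trans hz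
  rw [reducedObjective, dsq, sub_sq_comm z.1, sub_sq_comm z.2.1]
  refine add_le_add le_rfl (Finset.sum_le_sum fun i _ => ?_)
  rw [sub_sub]
  exact sq_max_abs_sub_le (hcoord i)

end Projection

/-- Dimension-reduction step in the proof of Proposition 2: if `(η⁺, η⁻)` minimizes
`g(a, b) = (a − ω⁺)² + (b − ω⁻)² + ∑ (max{|uᵢ| − a − b, 0})²` over the half-plane
`a + b ≥ 0`, then the Euclidean projection of `(ω⁺, ω⁻, u)` onto `E_∞` is
`(η⁺, η⁻, p)` with `pᵢ` the clamp of `uᵢ` to `[−(η⁺ + η⁻), η⁺ + η⁻]`. -/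
theorem stmt_9 (N : ℕ) (ωp ωm : ℝ) (u : Fin N → ℝ) (ηp ηm : ℝ)
    (hfeas : 0 ≤ ηp + ηm)
    (hmin : ∀ a b : ℝ, 0 ≤ a + b →
      (ηp - ωp) ^ 2 + (ηm - ωm) ^ 2 + ∑ i, (max (|u i| - ηp - ηm) 0) ^ 2 ≤
        (a - ωp) ^ 2 + (b - ωm) ^ 2 + ∑ i, (max (|u i| - a - b) 0) ^ 2) :
    (ηp, ηm, fun i => min (max (u i) (-(ηp + ηm))) (ηp + ηm)) ∈ Einf N ∧
    ∀ z ∈ Einf N,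
      dsq N (ωp, ωm, u) (ηp, ηm, fun i => min (max (u i) (-(ηp + ηm))) (ηp + ηm)) ≤
        dsq N (ωp, ωm, u) z := by
  refine ⟨clamp_mem_Einf u hfeas, fun z hz => ?_⟩
  have hz_feas : 0 ≤ z.1 + z.2.1 := (norm_nonneg _).trans hz
  calc dsq N (ωp, ωm, u) (ηp, ηm, fun i => min (max (u i) (-(ηp + ηm))) (ηp + ηm))
      = reducedObjective ωp ωm u ηp ηm := dsq_clamp_eq_reducedObjective ωp ωm u hfeas
    _ ≤ reducedObjective ωp ωm u z.1 z.2.1 := hmin _ _ hz_feas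
    _ ≤ dsq N (ωp, ωm, u) z := reducedObjective_le_dsq ωp ωm u hz
end

section
/- Let N ∈ ℕ and let E_1^+ = {(ω⁺, ω⁻, u) ∈ ℝ × ℝ × ℝ^N : Σ_{i=1}^N u_i = ω⁺ + ω⁻ and u_i ≥ 0 for all i}. Let (ω⁺, ω⁻, u) ∈ ℝ × ℝ × ℝ^N, let μ be a nonincreasing rearrangement of (u_1, …, u_N), and suppose ñ ∈ {1, …, N} is such that, setting η⁻ = (Σ_{i=1}^{ñ} μ_i − ω⁺ + (ñ + 1) ω⁻) / (ñ + 2), η⁺ = η⁻ + ω⁺ − ω⁻, and α = (Σ_{i=1}^{ñ} μ_i − (η⁺ + η⁻)) / ñ, one has μ_ñ > α and, if ñ < N, μ_{ñ+1} ≤ α. Then the Euclidean projection of (ω⁺, ω⁻, u) onto E_1^+ is (η⁺, η⁻, p) with p_i = max{u_i − α, 0} for every i. -/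
/-- `E_1^+ = {(ω⁺, ω⁻, u) : ∑ᵢ uᵢ = ω⁺ + ω⁻ and u ≥ 0}`. -/
def E1plus (N : ℕ) : Set (ℝ × ℝ × (Fin N → ℝ)) :=
  {z | (∑ i, z.2.2 i) = z.1 + z.2.1 ∧ ∀ i, 0 ≤ z.2.2 i}

open Finset

theorem sq_sub_add_two_mul_le_sq_sub (a b c : ℝ) :
    (a - b) ^ 2 + 2 * ((a - b) * (b - c)) ≤ (a - c) ^ 2 := by
  nlinarith [sq_nonneg (b - c)]

theorem mul_sub_le_sub_max_mul (x α v : ℝ) (hv : 0 ≤ v) :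
    α * (max (x - α) 0 - v) ≤ (x - max (x - α) 0) * (max (x - α) 0 - v) := by
  rcases le_or_gt (x - α) 0 with h | h
  · rw [max_eq_right h]
    nlinarith
  · rw [max_eq_left h.le]
    exact le_of_eq (by ring)

theorem sum_max_sub_eq_sum_Iic {ι : Type*} [Fintype ι] [LinearOrder ι] [LocallyFiniteOrderBot ι]
    {f : ι → ℝ} {α : ℝ} {k : ι} (hf : ∀ i, α < f i ↔ i ≤ k) :
    ∑ i, max (f i - α) 0 = ∑ i ∈ Iic k, (f i - α) := by
  rw [← filter_ge_eq_Iic, sum_filter]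
  refine sum_congr rfl fun i _ => ?_
  split_ifs with hi
  · exact max_eq_left (sub_nonneg.2 ((hf i).2 hi).le)
  · exact max_eq_right (sub_nonpos.2 (not_lt.1 (mt (hf i).1 hi)))

theorem Antitone.lt_iff_le_of_lt_of_succ_le {β : Type*} [LinearOrder β] {N : ℕ} {μ : Fin N → β}
    (hμ : Antitone μ) {k : Fin N} {α : β} (hk : α < μ k) (hsucc : ∀ j : Fin N, (j : ℕ) = (k : ℕ) + 1 → μ j ≤ α)
    (i : Fin N) : α < μ i ↔ i ≤ k := by
  refine ⟨fun hi => ?_, fun hi => hk.trans_le (hμ hi)⟩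
  by_contra hki
  have hlt : (k : ℕ) + 1 ≤ i := Fin.lt_def.1 (not_le.1 hki)
  have hsucc_le : (⟨(k : ℕ) + 1, hlt.trans_lt i.isLt⟩ : Fin N) ≤ i := hlt
  exact absurd (hsucc _ rfl) (not_le.2 (hi.trans_le (hμ hsucc_le)))

section Projection

variable {N : ℕ} {ωp ωm α : ℝ} {u : Fin N → ℝ}

theorem threshold_mem_E1plus (hsum : ∑ i, max (u i - α) 0 = ωp + ωm + 2 * α) :
    (ωp + α, ωm + α, fun i => max (u i - α) 0) ∈ E1plus N :=
  ⟨by rw [hsum]; ring, fun _ => le_max_right _ _⟩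

theorem dsq_threshold_le (hsum : ∑ i, max (u i - α) 0 = ωp + ωm + 2 * α)
    {z : ℝ × ℝ × (Fin N → ℝ)} (hz : z ∈ E1plus N) :
    dsq N (ωp, ωm, u) (ωp + α, ωm + α, fun i => max (u i - α) 0) ≤ dsq N (ωp, ωm, u) z := by
  obtain ⟨z₁, z₂, v⟩ := z
  obtain ⟨hv_sum, hv_nonneg⟩ := hz
  set p : Fin N → ℝ := fun i => max (u i - α) 0
  have hcross : α * ((ωp + ωm + 2 * α) - (z₁ + z₂)) ≤ ∑ i, (u i - p i) * (p i - v i) :=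
    calc α * ((ωp + ωm + 2 * α) - (z₁ + z₂)) = ∑ i, α * (p i - v i) := by
          rw [← mul_sum, sum_sub_distrib, hsum, ← hv_sum]
      _ ≤ _ := sum_le_sum fun i _ => mul_sub_le_sub_max_mul (u i) α (v i) (hv_nonneg i)
  have hsq : ∑ i, (u i - p i) ^ 2 + 2 * ∑ i, (u i - p i) * (p i - v i) ≤ ∑ i, (u i - v i) ^ 2 := by
    rw [mul_sum, ← sum_add_distrib]
    exact sum_le_sum fun i _ => sq_sub_add_two_mul_le_sq_sub (u i) (p i) (v i)
  have hp := sq_sub_add_two_mul_le_sq_sub ωp (ωp + α) z₁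
  have hm := sq_sub_add_two_mul_le_sq_sub ωm (ωm + α) z₂
  simp only [dsq]
  nlinarith

end Projection

/-- Here `μ` is a nonincreasing rearrangement of `(u₁, …, u_N)` and `nt : Fin N` is the 0-based
version of the 1-based index `ñ ∈ {1, …, N}` (so `ñ = nt + 1`, the partial sum `∑_{i=1}^{ñ} μᵢ` is
the sum over `i ≤ nt`, `ñ + 1 = nt + 2` and `ñ + 2 = nt + 3`). -/
theorem stmt_12 (N : ℕ) (ωp ωm : ℝ) (u μ : Fin N → ℝ) (σ : Equiv.Perm (Fin N))
    (hperm : ∀ i, μ i = u (σ i)) (hmono : Antitone μ)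
    (nt : Fin N) (ηp ηm α : ℝ)
    (hηm : ηm = ((∑ i ∈ Finset.univ.filter (fun i => i ≤ nt), μ i) - ωp +
        (((nt : ℕ) : ℝ) + 2) * ωm) / (((nt : ℕ) : ℝ) + 3))
    (hηp : ηp = ηm + ωp - ωm)
    (hα : α = ((∑ i ∈ Finset.univ.filter (fun i => i ≤ nt), μ i) - (ηp + ηm)) /
        (((nt : ℕ) : ℝ) + 1))
    (h1 : μ nt > α)
    (h2 : ∀ j : Fin N, (j : ℕ) = (nt : ℕ) + 1 → μ j ≤ α) :
    (ηp, ηm, fun i => max (u i - α) 0) ∈ E1plus N ∧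
    ∀ z ∈ E1plus N,
      dsq N (ωp, ωm, u) (ηp, ηm, fun i => max (u i - α) 0) ≤ dsq N (ωp, ωm, u) z := by
  rw [filter_ge_eq_Iic] at hηm hα
  have hn : (0 : ℝ) < (nt : ℕ) + 1 := by positivity
  have hα' : α * ((nt : ℕ) + 1) = ∑ i ∈ Iic nt, μ i - (ηp + ηm) := by
    rw [hα]; field_simp
  have hηm' : ηm * ((nt : ℕ) + 3) = ∑ i ∈ Iic nt, μ i - ωp + ((nt : ℕ) + 2) * ωm := by
    rw [hηm]; field_simp
  have hm : ηm = ωm + α :=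
    mul_right_cancel₀ hn.ne' (by linear_combination hηm' - hα' + hηp)
  obtain rfl : ηp = ωp + α := by linarith
  subst hm
  have hsum : ∑ i, max (u i - α) 0 = ωp + ωm + 2 * α := by
    rw [← Equiv.sum_comp σ]
    simp only [← hperm]
    rw [      sum_max_sub_eq_sum_Iic (hmono.lt_iff_le_of_lt_of_succ_le h1 h2), sum_sub_distrib,
      sum_const, Fin.card_Iic, nsmul_eq_mul]
    push_cast
    linear_combination -hα'
  exact ⟨threshold_mem_E1plus hsum, fun z hz => dsq_threshold_le hsum hz⟩
end

section
/- Let N ∈ ℕ, let E_1 = {(ω⁺, ω⁻, u) ∈ ℝ × ℝ × ℝ^N : ‖u‖_1 ≤ ω⁺ + ω⁻} and E_1^+ = {(ω⁺, ω⁻, u) ∈ ℝ × ℝ × ℝ^N : Σ_i u_i = ω⁺ + ω⁻ and u_i ≥ 0 for all i}. Let (u⁺, u⁻, w) ∈ ℝ × ℝ × ℝ^N with w_i ≠ 0 for all i and ‖w‖_1 > u⁺ + u⁻. If (v⁺, v⁻, p̂) is the Euclidean projection of (u⁺, u⁻, (|w_1|, …, |w_N|)) onto E_1^+, then the Euclidean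 projection of (u⁺, u⁻, w) onto E_1 is (v⁺, v⁻, p) with p_i = sign(w_i) · p̂_i for every i. -/
/-- `E_1 = {(ω⁺, ω⁻, u) : ‖u‖₁ ≤ ω⁺ + ω⁻}`. -/
def E1 (N : ℕ) : Set (ℝ × ℝ × (Fin N → ℝ)) := {z | (∑ i, |z.2.2 i|) ≤ z.1 + z.2.1}

/-! Taking absolute values of the last `N` coordinates does not increase distances, and
restoring the signs of `w` on `p̂` keeps the distance to `(u⁺, u⁻, w)` at most that of `p̂` to
`(u⁺, u⁻, |w|)`. So it suffices to beat every point `(a, b, |u|)` with `(a, b, u) ∈ E_1`. The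
segment from `(u⁺, u⁻, |w|)`, where `Σ |wᵢ| > u⁺ + u⁻`, to `(a, b, |u|)`, where `Σ |uᵢ| ≤ a + b`,
stays in the nonnegative orthant and crosses `E_1^+`; the crossing point is no farther from
`(u⁺, u⁻, |w|)` than `(a, b, |u|)` is, and no nearer than `(v⁺, v⁻, p̂)`. -/

section

variable {N : ℕ}

lemma abs_sign_mul_le (r p : ℝ) : |Real.sign r * p| ≤ |p| := by
  rcases lt_trichotomy r 0 with h | rfl | h
  · simp [Real.sign_of_neg h]
  · simp
  · simp [Real.sign_of_pos h]

lemma sq_sub_sign_mul_le (r p : ℝ) : (r - Real.sign r * p) ^ 2 ≤ (|r| - p) ^ 2 := by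
  rcases lt_trichotomy r 0 with h | rfl | h
  · rw [Real.sign_of_neg h, abs_of_neg h]; nlinarith
  · simpa using sq_nonneg p
  · rw [Real.sign_of_pos h, abs_of_pos h]; nlinarith

lemma dsq_nonneg (z z' : ℝ × ℝ × (Fin N → ℝ)) : 0 ≤ dsq N z z' := by
  unfold dsq; positivity

lemma dsq_sign_mul_le (a b c d : ℝ) (w p : Fin N → ℝ) :
    dsq N (a, b, w) (c, d, fun i => Real.sign (w i) * p i) ≤
      dsq N (a, b, fun i => |w i|) (c, d, p) := by
  unfold dsq
  exact add_le_add le_rfl (Finset.sum_le_sum fun i _ => sq_sub_sign_mul_le (w i) (p i))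

lemma dsq_abs_le (a b c d : ℝ) (w u : Fin N → ℝ) :
    dsq N (a, b, fun i => |w i|) (c, d, fun i => |u i|) ≤ dsq N (a, b, w) (c, d, u) := by
  unfold dsq
  refine add_le_add le_rfl (Finset.sum_le_sum fun i _ => ?_)
  exact sq_le_sq.mpr (by simpa using abs_abs_sub_abs_le_abs_sub (w i) (u i))

lemma sign_mul_mem_E1 {c d : ℝ} {w p : Fin N → ℝ} (h : (c, d, p) ∈ E1plus N) :
    (c, d, fun i => Real.sign (w i) * p i) ∈ E1 N := by
  obtain ⟨hsum, hpos⟩ := h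
  calc ∑ i, |Real.sign (w i) * p i| ≤ ∑ i, |p i| :=
        Finset.sum_le_sum fun i _ => abs_sign_mul_le (w i) (p i)
    _ = c + d := by simpa [abs_of_nonneg (hpos _)] using hsum

lemma dsq_convexComb (x z : ℝ × ℝ × (Fin N → ℝ)) (t : ℝ) :
    dsq N x (t • x + (1 - t) • z) = (1 - t) ^ 2 * dsq N x z := by
  simp only [dsq, Prod.fst_add, Prod.snd_add, Prod.smul_fst, Prod.smul_snd, Pi.add_apply,
    Pi.smul_apply, smul_eq_mul]
  have hterm : ∀ i, (x.2.2 i - (t * x.2.2 i + (1 - t) * z.2.2 i)) ^ 2 =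
      (1 - t) ^ 2 * (x.2.2 i - z.2.2 i) ^ 2 := fun i => by ring
  simp only [hterm, ← Finset.mul_sum]
  ring

lemma dsq_convexComb_le (x z : ℝ × ℝ × (Fin N → ℝ)) {t : ℝ} (ht : t ∈ Set.Icc (0 : ℝ) 1) :
    dsq N x (t • x + (1 - t) • z) ≤ dsq N x z := by
  rw [dsq_convexComb]
  have : (1 - t) ^ 2 ≤ 1 := by nlinarith [ht.1, ht.2]
  nlinarith [dsq_nonneg x z]

lemma exists_convexComb_mem_E1plus {x z : ℝ × ℝ × (Fin N → ℝ)}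
    (hx : ∀ i, 0 ≤ x.2.2 i) (hz : ∀ i, 0 ≤ z.2.2 i)
    (hxs : x.1 + x.2.1 < ∑ i, x.2.2 i) (hzs : ∑ i, z.2.2 i ≤ z.1 + z.2.1) :
    ∃ t ∈ Set.Icc (0 : ℝ) 1, t • x + (1 - t) • z ∈ E1plus N := by
  set c := z.1 + z.2.1 - ∑ i, z.2.2 i
  set d := ∑ i, x.2.2 i - (x.1 + x.2.1)
  have hc : 0 ≤ c := by linarith
  have hd : 0 < d := by linarith
  set t := c / (c + d)
  have ht0 : 0 ≤ t := by positivity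
  have ht1 : t ≤ 1 := (div_le_one (by positivity)).mpr (by linarith)
  refine ⟨t, ⟨ht0, ht1⟩, ?_, fun i => ?_⟩
  · have hbal : t * d = (1 - t) * c := by simp only [t]; field_simp; ring
    simp only [Prod.fst_add, Prod.snd_add, Prod.smul_fst, Prod.smul_snd, Pi.add_apply,
      Pi.smul_apply, smul_eq_mul, Finset.sum_add_distrib, ← Finset.mul_sum]
    linarith
  · simp only [Prod.snd_add, Prod.smul_snd, Pi.add_apply, Pi.smul_apply, smul_eq_mul]
    have := mul_nonneg ht0 (hx i)
    have := mul_nonneg (sub_nonneg.mpr ht1) (hz i)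
    linarith

end

theorem stmt_14_general (N : ℕ) (up um : ℝ) (w : Fin N → ℝ)
    (hout : ∑ i, |w i| > up + um)
    (vp vm : ℝ) (phat : Fin N → ℝ)
    (hmem : (vp, vm, phat) ∈ E1plus N)
    (hproj : ∀ z ∈ E1plus N,
      dsq N (up, um, fun i => |w i|) (vp, vm, phat) ≤ dsq N (up, um, fun i => |w i|) z) :
    (vp, vm, fun i => Real.sign (w i) * phat i) ∈ E1 N ∧
    ∀ z ∈ E1 N,
      dsq N (up, um, w) (vp, vm, fun i => Real.sign (w i) * phat i) ≤
        dsq N (up, um, w) z := by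
  refine ⟨sign_mul_mem_E1 hmem, ?_⟩
  rintro ⟨a, b, u⟩ hz
  obtain ⟨t, ht, hy⟩ := exists_convexComb_mem_E1plus (x := (up, um, fun i => |w i|))
    (z := (a, b, fun i => |u i|)) (fun i => abs_nonneg (w i)) (fun i => abs_nonneg (u i))
    hout hz
  calc dsq N (up, um, w) (vp, vm, fun i => Real.sign (w i) * phat i)
      ≤ dsq N (up, um, fun i => |w i|) (vp, vm, phat) := dsq_sign_mul_le ..
    _ ≤ _ := hproj _ hy
    _ ≤ dsq N (up, um, fun i => |w i|) (a, b, fun i => |u i|) := dsq_convexComb_le _ _ ht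
    _ ≤ dsq N (up, um, w) (a, b, u) := dsq_abs_le ..

/-- Proposition 4: if `(u⁺, u⁻, w)` lies strictly outside `E_1` and all `wᵢ ≠ 0`, its
Euclidean projection onto `E_1` is obtained by projecting `(u⁺, u⁻, |w|)` onto `E_1^+`
and restoring the signs. -/
theorem stmt_14 (N : ℕ) (up um : ℝ) (w : Fin N → ℝ)
    (hw : ∀ i, w i ≠ 0) (hout : ∑ i, |w i| > up + um)
    (vp vm : ℝ) (phat : Fin N → ℝ)
    (hmem : (vp, vm, phat) ∈ E1plus N)
    (hproj : ∀ z ∈ E1plus N,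
      dsq N (up, um, fun i => |w i|) (vp, vm, phat) ≤ dsq N (up, um, fun i => |w i|) z) :
    (vp, vm, fun i => Real.sign (w i) * phat i) ∈ E1 N ∧
    ∀ z ∈ E1 N,
      dsq N (up, um, w) (vp, vm, fun i => Real.sign (w i) * phat i) ≤
        dsq N (up, um, w) z :=
  stmt_14_general N up um w hout vp vm phat hmem hproj
end

section
/- Let N ∈ ℕ, let E_1 = {(ω⁺, ω⁻, u) ∈ ℝ × ℝ × ℝ^N : ‖u‖_1 ≤ ω⁺ + ω⁻}, and let (ω⁺, ω⁻, w) ∈ ℝ × ℝ × ℝ^N. Then the Euclidean projection (η⁺, η⁻, p) of (ω⁺, ω⁻, w) onto E_1 satisfies p_i · w_i ≥ 0 and |p_i| ≤ |w_i| for every i ∈ {1, …, N}. -/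
/-! Shrinking one coordinate of `u` in absolute value keeps `(a, b, u)` in `E_1` and changes the
squared distance only in that coordinate. Hence `p i` is a closest point to `w i` in the interval
`[-|p i|, |p i|]`; comparing with `t = 0` and, if `|w i| < |p i|`, with `t = w i` gives both claims. -/

open Function

theorem Finset.sum_apply_update_add {ι β M : Type*} [Fintype ι] [DecidableEq ι] [AddCommMonoid M]
    (f : ι → β → M) (u : ι → β) (i : ι) (t : β) :
    ∑ j, f j (update u i t j) + f i (u i) = ∑ j, f j (u j) + f i t := by
  simp only [apply_update f u i t, sum_update_of_mem (mem_univ i),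
    sum_eq_add_sum_sdiff_singleton_of_mem (mem_univ i) fun j ↦ f j (u j)]
  abel

theorem update_mem_E1_of_abs_le {N : ℕ} {a b : ℝ} {u : Fin N → ℝ} (hu : (a, b, u) ∈ E1 N)
    {i : Fin N} {t : ℝ} (ht : |t| ≤ |u i|) : (a, b, update u i t) ∈ E1 N := by
  have h := Finset.sum_apply_update_add (fun _ x ↦ |x|) u i t
  simp only [E1, Set.mem_ofPred_eq] at hu ⊢
  linarith

theorem dsq_update_add (N : ℕ) (z : ℝ × ℝ × (Fin N → ℝ)) (a b : ℝ) (u : Fin N → ℝ) (i : Fin N)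
    (t : ℝ) : dsq N z (a, b, update u i t) + (z.2.2 i - u i) ^ 2 =
      dsq N z (a, b, u) + (z.2.2 i - t) ^ 2 := by
  have h := Finset.sum_apply_update_add (fun j x ↦ (z.2.2 j - x) ^ 2) u i t
  simp only [dsq]
  linarith

theorem sq_sub_le_of_forall_dsq_le {N : ℕ} {z : ℝ × ℝ × (Fin N → ℝ)} {a b : ℝ} {u : Fin N → ℝ}
    (hu : (a, b, u) ∈ E1 N) (hmin : ∀ y ∈ E1 N, dsq N z (a, b, u) ≤ dsq N z y)
    {i : Fin N} {t : ℝ} (ht : |t| ≤ |u i|) : (z.2.2 i - u i) ^ 2 ≤ (z.2.2 i - t) ^ 2 := by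
  have hle := hmin _ (update_mem_E1_of_abs_le hu ht)
  have hdsq := dsq_update_add N z a b u i t
  linarith

theorem mul_nonneg_and_abs_le_of_forall_sq_sub_le {w p : ℝ}
    (h : ∀ t : ℝ, |t| ≤ |p| → (w - p) ^ 2 ≤ (w - t) ^ 2) : 0 ≤ p * w ∧ |p| ≤ |w| := by
  have h_zero := h 0 (by simp)
  refine ⟨by nlinarith [sq_nonneg p], le_of_not_gt fun hwp ↦ hwp.ne ?_⟩
  have h_self : (w - p) ^ 2 ≤ 0 := by simpa using h w hwp.le
  rw [show p = w by nlinarith [sq_nonneg (w - p)]]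

/-- Sign preservation and contraction: the Euclidean projection `(η⁺, η⁻, p)` of
`(ω⁺, ω⁻, w)` onto `E_1` satisfies `pᵢ wᵢ ≥ 0` and `|pᵢ| ≤ |wᵢ|` for every `i`. -/
theorem stmt_15 (N : ℕ) (ωp ωm : ℝ) (w : Fin N → ℝ) (ηp ηm : ℝ) (p : Fin N → ℝ)
    (hmem : (ηp, ηm, p) ∈ E1 N)
    (hproj : ∀ z ∈ E1 N, dsq N (ωp, ωm, w) (ηp, ηm, p) ≤ dsq N (ωp, ωm, w) z) :
    ∀ i, 0 ≤ p i * w i ∧ |p i| ≤ |w i| := fun _ ↦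
  mul_nonneg_and_abs_le_of_forall_sq_sub_le fun _ ↦ sq_sub_le_of_forall_dsq_le hmem hproj
end

section
/- Let N ∈ ℕ, u ∈ ℝ^N, and t ≥ 0. Let p be the Euclidean projection of u onto the set Δ_t = {p ∈ ℝ^N : p_i ≥ 0 for all i, Σ_{i=1}^N p_i = t}. Then there exists α ∈ ℝ such that p_i = max{u_i − α, 0} for every i, and consequently Σ_{i=1}^N max{u_i − α, 0} = t. -/
/-! Moving a small mass `ε ∈ (0, p i]` from a coordinate `i` with `p i > 0` to any `j` stays in
`Δ_t` and changes the squared distance to `u` by `2ε((p j - u j) - (p i - u i)) + 2ε²`, so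
minimality forces `u i - p i` to be the largest of the `u j - p j` whenever `p i > 0`. With `α`
that largest value, `p i = u i - α` on the support of `p` and `u i - α ≤ 0` off it. -/

section
variable {ι : Type*} [DecidableEq ι]

def moveMass (p : ι → ℝ) (i j : ι) (ε : ℝ) : ι → ℝ :=
  fun k => p k + (if k = j then ε else 0) - (if k = i then ε else 0)

lemma moveMass_nonneg {p : ι → ℝ} (hp : ∀ k, 0 ≤ p k) {i j : ι} {ε : ℝ} (hε : 0 ≤ ε)
    (hεi : ε ≤ p i) (k : ι) : 0 ≤ moveMass p i j ε k := by
  unfold moveMass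
  split_ifs <;> subst_vars <;> linarith [hp k]

variable [Fintype ι]

lemma sum_moveMass (p : ι → ℝ) (i j : ι) (ε : ℝ) : ∑ k, moveMass p i j ε k = ∑ k, p k := by
  simp [moveMass, Finset.sum_add_distrib, Finset.sum_sub_distrib]

lemma sum_sq_moveMass (p u : ι → ℝ) {i j : ι} (hij : i ≠ j) (ε : ℝ) :
    ∑ k, (moveMass p i j ε k - u k) ^ 2
      = ∑ k, (p k - u k) ^ 2 + 2 * (ε * ((p j - u j) - (p i - u i)) + ε ^ 2) := by
  have hexpand : ∀ k, (moveMass p i j ε k - u k) ^ 2 = (p k - u k) ^ 2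
      + 2 * ε * ((if k = j then p k - u k else 0) - (if k = i then p k - u k else 0))
      + ε ^ 2 * ((if k = j then 1 else 0) + (if k = i then 1 else 0)) := by
    intro k
    unfold moveMass
    by_cases hj : k = j <;> by_cases hi : k = i <;> simp_all <;> ring
  simp only [hexpand, Finset.sum_add_distrib, ← Finset.mul_sum, Finset.sum_sub_distrib,
    Finset.sum_ite_eq', Finset.mem_univ, ↓reduceIte]
  ring

lemma nonneg_of_forall_mul_add_sq_nonneg {a δ : ℝ} (hδ : 0 < δ)
    (h : ∀ ε, 0 < ε → ε ≤ δ → 0 ≤ ε * a + ε ^ 2) : 0 ≤ a := by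
  by_contra! ha
  set ε := min δ (-a / 2)
  have hε : 0 < ε := lt_min hδ (by linarith)
  have := h ε hε (min_le_left _ _)
  nlinarith [min_le_right δ (-a / 2)]

lemma sub_le_sub_of_isMinOn_simplex {u p : ι → ℝ} (hp : ∀ k, 0 ≤ p k)
    (hmin : IsMinOn (fun q => ∑ k, (q k - u k) ^ 2) {q | (∀ k, 0 ≤ q k) ∧ ∑ k, q k = ∑ k, p k} p)
    {i : ι} (hi : 0 < p i) (j : ι) : u j - p j ≤ u i - p i := by
  rcases eq_or_ne i j with rfl | hij
  · rfl
  suffices 0 ≤ (p j - u j) - (p i - u i) by linarith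
  refine nonneg_of_forall_mul_add_sq_nonneg hi fun ε hε hεi => ?_
  have hle := isMinOn_iff.mp hmin (moveMass p i j ε)
    ⟨moveMass_nonneg hp hε.le hεi, sum_moveMass p i j ε⟩
  rw [sum_sq_moveMass p u hij] at hle
  linarith

end

lemma exists_eq_max_sub_of_sub_le_sub {ι : Type*} [Finite ι] {u p : ι → ℝ} (hp : ∀ k, 0 ≤ p k)
    (h : ∀ i j, 0 < p i → u j - p j ≤ u i - p i) : ∃ α : ℝ, ∀ i, p i = max (u i - α) 0 := by
  have hbdd : BddAbove (Set.range fun k => u k - p k) := (Set.finite_range _).bddAbove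
  refine ⟨⨆ k, (u k - p k), fun i => ?_⟩
  have hle : u i - p i ≤ ⨆ k, (u k - p k) := le_ciSup hbdd i
  rcases (hp i).eq_or_lt with hi | hi
  · rw [← hi, max_eq_right (by linarith)]
  · have : Nonempty ι := ⟨i⟩
    have hge : ⨆ k, (u k - p k) ≤ u i - p i := ciSup_le (h i · hi)
    rw [max_eq_left (by linarith)]
    linarith

theorem stmt_17_general (N : ℕ) (u : Fin N → ℝ) (t : ℝ) (p : Fin N → ℝ)
    (hpos : ∀ i, 0 ≤ p i) (hsum : ∑ i, p i = t)
    (hproj : ∀ q : Fin N → ℝ, (∀ i, 0 ≤ q i) → (∑ i, q i = t) →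
      ∑ i, (p i - u i) ^ 2 ≤ ∑ i, (q i - u i) ^ 2) :
    ∃ α : ℝ, (∀ i, p i = max (u i - α) 0) ∧ ∑ i, max (u i - α) 0 = t := by
  have hmin : IsMinOn (fun q => ∑ i, (q i - u i) ^ 2)
      {q | (∀ i, 0 ≤ q i) ∧ ∑ i, q i = ∑ i, p i} p :=
    isMinOn_iff.mpr fun q ⟨hq, hqsum⟩ => hproj q hq (hqsum.trans hsum)
  obtain ⟨α, hα⟩ := exists_eq_max_sub_of_sub_le_sub hpos fun i j hi =>
    sub_le_sub_of_isMinOn_simplex hpos hmin hi j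
  refine ⟨α, hα, ?_⟩
  simp_rw [← hα]
  exact hsum

/-- Soft-thresholding structure of the projection onto the scaled simplex
`Δ_t = {p : p ≥ 0, ∑ᵢ pᵢ = t}`: the Euclidean projection `p` of `u` onto `Δ_t`
satisfies `pᵢ = max{uᵢ − α, 0}` for some `α ∈ ℝ`, and consequently
`∑ᵢ max{uᵢ − α, 0} = t`. -/
theorem stmt_17 (N : ℕ) (u : Fin N → ℝ) (t : ℝ) (ht : 0 ≤ t) (p : Fin N → ℝ)
    (hpos : ∀ i, 0 ≤ p i) (hsum : ∑ i, p i = t)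
    (hproj : ∀ q : Fin N → ℝ, (∀ i, 0 ≤ q i) → (∑ i, q i = t) →
      ∑ i, (p i - u i) ^ 2 ≤ ∑ i, (q i - u i) ^ 2) :
    ∃ α : ℝ, (∀ i, p i = max (u i - α) 0) ∧ ∑ i, max (u i - α) 0 = t :=
  stmt_17_general N u t p hpos hsum hproj
end
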